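/- Let r, s ∈ (0, 1) be real numbers satisfying r > 1/2 or s < 1/2, and consider the vectors u = (r − 1/2, −1) and v = (1, s − 1/2) in the Euclidean plane ℝ². Then the cosine of the angle between u and v equals (r − s)/(√(1 + (r − 1/2)²)·√(1 + (s − 1/2)²)), i.e. ⟨u, v⟩/(‖u‖·‖v‖) = (r − s)/(√(1 + (r − 1/2)²)·√(1 + (s − 1/2)²)), and this value lies strictly between −1/√5 and 4/5. -/

import Mathlib

/-!
With `a = r - 1/2`, `b = s - 1/2 ∈ (-1/2, 1/2)` the cosine is `(a - b) / (√(1 + a²) √(1 + b²))`.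
The upper bound `4/5` is the value at the corner `a = 1/2`, `b = -1/2`, and
`25 (a - b)² < 16 (1 + a²)(1 + b²)` on the open square. For the lower bound, if `0 < a` and
`b - a > 0` then `(b - a) / (√(1 + a²) √(1 + b²)) < b / √(1 + b²)`, and `x ↦ x / √(1 + x²)` is
below its value `1/√5` at `x = 1/2`; the case `b < 0` is symmetric.
-/

open RealInnerProductSpace

noncomputable def vec2 (a b : ℝ) : EuclideanSpace ℝ (Fin 2) :=
  (WithLp.equiv 2 (Fin 2 → ℝ)).symm ![a, b]

lemma inner_vec2 (a b c d : ℝ) : ⟪vec2 a b, vec2 c d⟫ = a * c + b * d := by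
  simp [vec2, PiLp.inner_apply, Fin.sum_univ_two, mul_comm]

lemma norm_vec2 (a b : ℝ) : ‖vec2 a b‖ = √(a ^ 2 + b ^ 2) := by
  simp [EuclideanSpace.norm_eq, vec2, Fin.sum_univ_two]

lemma div_sqrt_one_add_sq_lt_one_div_sqrt_five {x : ℝ} (hx : x < 1 / 2) :
    x / √(1 + x ^ 2) < 1 / √5 := by
  rcases le_or_gt x 0 with hx0 | hx0
  · exact (div_nonpos_of_nonpos_of_nonneg hx0 (by positivity)).trans_lt (by positivity)
  rw [div_lt_div_iff₀ (by positivity) (by positivity), one_mul]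
  refine Real.lt_sqrt_of_sq_lt ?_
  rw [mul_pow, Real.sq_sqrt (by norm_num)]
  nlinarith

lemma sub_div_sqrt_mul_sqrt_lt_four_fifths {a b : ℝ} (ha : |a| < 1 / 2) (hb : |b| < 1 / 2) :
    (a - b) / (√(1 + a ^ 2) * √(1 + b ^ 2)) < 4 / 5 := by
  have ha2 : a ^ 2 < 1 / 4 := by nlinarith [sq_abs a, abs_nonneg a]
  have hb2 : b ^ 2 < 1 / 4 := by nlinarith [sq_abs b, abs_nonneg b]
  have key : 25 * (a - b) ^ 2 < 16 * ((1 + a ^ 2) * (1 + b ^ 2)) := by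
    nlinarith [mul_pos (sub_pos.2 ha2) (sub_pos.2 hb2), sq_nonneg (a + b)]
  have : 5 / 4 * (a - b) < √((1 + a ^ 2) * (1 + b ^ 2)) := Real.lt_sqrt_of_sq_lt (by linarith)
  rw [← Real.sqrt_mul (by positivity), div_lt_iff₀ (by positivity)]
  linarith

lemma sub_div_sqrt_mul_sqrt_lt_of_pos {a b : ℝ} (ha : 0 < a) (hb : b < 1 / 2) :
    (b - a) / (√(1 + a ^ 2) * √(1 + b ^ 2)) < 1 / √5 := by
  rcases le_or_gt b a with hba | hab
  · exact (div_nonpos_of_nonpos_of_nonneg (sub_nonpos.2 hba) (by positivity)).trans_lt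
      (by positivity)
  have hp : 1 ≤ √(1 + a ^ 2) := Real.one_le_sqrt.2 (by nlinarith)
  calc (b - a) / (√(1 + a ^ 2) * √(1 + b ^ 2)) ≤ (b - a) / √(1 + b ^ 2) := by
        rw [mul_comm]
        exact div_le_div_of_nonneg_left (by linarith) (by positivity)
          (le_mul_of_one_le_right (by positivity) hp)
    _ < b / √(1 + b ^ 2) := by gcongr; linarith
    _ < 1 / √5 := div_sqrt_one_add_sq_lt_one_div_sqrt_five hb

lemma neg_one_div_sqrt_five_lt_sub_div_sqrt_mul_sqrt {a b : ℝ} (ha : -(1 / 2) < a)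
    (hb : b < 1 / 2) (hab : 0 < a ∨ b < 0) :
    -(1 / √5) < (a - b) / (√(1 + a ^ 2) * √(1 + b ^ 2)) := by
  rw [neg_lt, ← neg_div, neg_sub]
  rcases hab with ha0 | hb0
  · exact sub_div_sqrt_mul_sqrt_lt_of_pos ha0 hb
  · rw [mul_comm, show b - a = -a - -b by ring, ← neg_sq a, ← neg_sq b]
    exact sub_div_sqrt_mul_sqrt_lt_of_pos (neg_pos.2 hb0) (by linarith)

/-- For `r, s ∈ (0, 1)` with `r > 1/2` or `s < 1/2`, the cosine of the angle between
`u = (r − 1/2, −1)` and `v = (1, s − 1/2)` equals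
`(r − s)/(√(1 + (r − 1/2)²)·√(1 + (s − 1/2)²))`, and this value lies strictly
between `−1/√5` and `4/5`. -/
theorem stmt4 (r s : ℝ) (hr : r ∈ Set.Ioo (0 : ℝ) 1) (hs : s ∈ Set.Ioo (0 : ℝ) 1)
    (hrs : 1 / 2 < r ∨ s < 1 / 2)
    (u v : EuclideanSpace ℝ (Fin 2))
    (hu : u = vec2 (r - 1 / 2) (-1)) (hv : v = vec2 1 (s - 1 / 2)) :
    ⟪u, v⟫ / (‖u‖ * ‖v‖) =
      (r - s) / (Real.sqrt (1 + (r - 1 / 2) ^ 2) * Real.sqrt (1 + (s - 1 / 2) ^ 2)) ∧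
    -(1 / Real.sqrt 5) <
      (r - s) / (Real.sqrt (1 + (r - 1 / 2) ^ 2) * Real.sqrt (1 + (s - 1 / 2) ^ 2)) ∧
    (r - s) / (Real.sqrt (1 + (r - 1 / 2) ^ 2) * Real.sqrt (1 + (s - 1 / 2) ^ 2)) <
      4 / 5 := by
  obtain ⟨hr0, hr1⟩ := hr
  obtain ⟨hs0, hs1⟩ := hs
  have hsub : r - s = (r - 1 / 2) - (s - 1 / 2) := by ring
  refine ⟨?_, ?_, ?_⟩
  · subst hu hv
    rw [inner_vec2, norm_vec2, norm_vec2]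
    congr 1
    · ring
    · congr 2 <;> ring
  · rw [hsub]
    exact neg_one_div_sqrt_five_lt_sub_div_sqrt_mul_sqrt (by linarith) (by linarith)
      (hrs.imp (by intro; linarith) (by intro; linarith))
  · rw [hsub]
    exact sub_div_sqrt_mul_sqrt_lt_four_fifths (abs_lt.2 ⟨by linarith, by linarith⟩)
      (abs_lt.2 ⟨by linarith, by linarith⟩)
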